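/- Every digraph that is ℝ^2-realizable is transitive; equivalently, every digraph with weak majority dimension at most two is transitive. -/

import Mathlib

/-- A digraph on vertex set `V`: an asymmetric arc relation
(no loops, no pairs of opposite arcs, so the underlying graph is simple). -/
structure WDigraph (V : Type*) where
  Adj : V → V → Prop
  asymm : ∀ u v, Adj u v → ¬ Adj v u

/-- The weak majority relation on `ℝ^d`:
`weakMaj x y` means `x ≻ y`, i.e. `|{i : x i > y i}| > |{i : y i > x i}|`. -/
def weakMaj {d : ℕ} (x y : Fin d → ℝ) : Prop :=
  Nat.card {i : Fin d // x i < y i} < Nat.card {i : Fin d // y i < x i}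

/-- `D` is `ℝ^d`-realizable: there is `f : V → ℝ^d` with
`(u,v) ∈ A(D)` iff `f u ≻ f v`. -/
def Realizable {V : Type*} (D : WDigraph V) (d : ℕ) : Prop :=
  ∃ f : V → Fin d → ℝ, ∀ u v, D.Adj u v ↔ weakMaj (f u) (f v)

/-- The weak majority dimension of a digraph. -/
noncomputable def wdim {V : Type*} (D : WDigraph V) : ℕ :=
  sInf {d : ℕ | Realizable D d}

open scoped Classical

section Aux

lemma card_subtype_eq_sum' {I : Type*} [Fintype I] (P : I → Prop) :
    Nat.card {i // P i} = ∑ i, if P i then 1 else 0 := by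
  classical
  rw [Nat.card_eq_fintype_card, Fintype.card_subtype, Finset.card_filter]

lemma weakMaj_char0' (x y : Fin 0 → ℝ) : ¬ weakMaj x y := by
  simp [weakMaj, card_subtype_eq_sum']

lemma weakMaj_char1' (x y : Fin 1 → ℝ) : weakMaj x y ↔ y 0 < x 0 := by
  rw [weakMaj, card_subtype_eq_sum', card_subtype_eq_sum', Fin.sum_univ_one, Fin.sum_univ_one]
  rcases lt_trichotomy (x 0) (y 0) with h | h | h <;> simp_all [h.not_gt, h.le]

lemma weakMaj_char2' (x y : Fin 2 → ℝ) :
    weakMaj x y ↔ (y 0 ≤ x 0 ∧ y 1 ≤ x 1 ∧ (y 0 < x 0 ∨ y 1 < x 1)) := by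
  rw [weakMaj, card_subtype_eq_sum', card_subtype_eq_sum', Fin.sum_univ_two, Fin.sum_univ_two]
  rcases lt_trichotomy (x 0) (y 0) with h | h | h <;>
    rcases lt_trichotomy (x 1) (y 1) with h' | h' | h' <;>
    simp_all [h.not_gt, h.le, le_of_eq, le_of_lt] <;> split_ifs <;> simp_all <;> linarith

noncomputable def gad0' {V : Type*} (a b w : V) : ℝ :=
  if w = a then 2 else if w = b then 1 else 0

noncomputable def gad1' {V : Type*} (a b w : V) : ℝ :=
  if w = a then 1 else if w = b then 0 else 2

lemma gadget_delta' {V : Type*} (a b u v : V) (hab : a ≠ b) :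
    ((if gad0' a b v < gad0' a b u then (1:ℤ) else 0)
        + (if gad1' a b v < gad1' a b u then 1 else 0))
      - ((if gad0' a b u < gad0' a b v then (1:ℤ) else 0)
        + (if gad1' a b u < gad1' a b v then 1 else 0))
    = (if u = a ∧ v = b then 2 else 0) - (if u = b ∧ v = a then 2 else 0) := by
  unfold gad0' gad1'
  by_cases hua : u = a <;> by_cases hub : u = b <;> by_cases hva : v = a <;> by_cases hvb : v = b <;>
    simp_all <;> norm_num

lemma exists_realizable' {V : Type*} [Fintype V] (D : WDigraph V) : ∃ d, Realizable D d := by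
  classical
  set E := {p : V × V // D.Adj p.1 p.2} with hE
  set F : V → E × Fin 2 → ℝ :=
    fun w c => if c.2 = 0 then gad0' c.1.1.1 c.1.1.2 w else gad1' c.1.1.1 c.1.1.2 w with hF
  have hsum : ∀ e_pt : V × V,
      (∑ e : E, (if e.1 = e_pt then (2:ℤ) else 0))
        = if D.Adj e_pt.1 e_pt.2 then 2 else 0 := by
    intro c
    by_cases h : D.Adj c.1 c.2
    · rw [if_pos h]
      have : ∀ e : E, (if e.1 = c then (2:ℤ) else 0) = if e = ⟨c, h⟩ then 2 else 0 := by
        intro e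
        exact if_congr (Iff.symm Subtype.ext_iff) rfl rfl
      simp only [this]
      convert Finset.sum_ite_eq' Finset.univ (⟨c, h⟩ : E) (fun _ => (2:ℤ)) using 1
      simp
    · rw [if_neg h]
      apply Finset.sum_eq_zero
      intro e _
      rw [if_neg]
      intro hec
      exact h (hec ▸ e.2)
  have key : ∀ u v, D.Adj u v ↔
      Nat.card {c : E × Fin 2 // F u c < F v c} < Nat.card {c : E × Fin 2 // F v c < F u c} := by
    intro u v
    have hA : ((Nat.card {c : E × Fin 2 // F u c < F v c} : ℤ))
        = ∑ e : E, ((if F u (e,0) < F v (e,0) then (1:ℤ) else 0)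
            + (if F u (e,1) < F v (e,1) then 1 else 0)) := by
      rw [card_subtype_eq_sum']
      push_cast [apply_ite (Nat.cast : ℕ → ℤ)]
      rw [Fintype.sum_prod_type]
      congr 1
      ext e
      rw [Fin.sum_univ_two]
    have hB : ((Nat.card {c : E × Fin 2 // F v c < F u c} : ℤ))
        = ∑ e : E, ((if F v (e,0) < F u (e,0) then (1:ℤ) else 0)
            + (if F v (e,1) < F u (e,1) then 1 else 0)) := by
      rw [card_subtype_eq_sum']
      push_cast [apply_ite (Nat.cast : ℕ → ℤ)]
      rw [Fintype.sum_prod_type]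
      congr 1
      ext e
      rw [Fin.sum_univ_two]
    have hdiff : ((Nat.card {c : E × Fin 2 // F v c < F u c} : ℤ))
        - ((Nat.card {c : E × Fin 2 // F u c < F v c} : ℤ))
        = (if D.Adj u v then 2 else 0) - (if D.Adj v u then 2 else 0) := by
      rw [hA, hB, ← Finset.sum_sub_distrib]
      have hterm : ∀ e : E,
          (((if F v (e,0) < F u (e,0) then (1:ℤ) else 0)
              + (if F v (e,1) < F u (e,1) then 1 else 0))
          - ((if F u (e,0) < F v (e,0) then (1:ℤ) else 0)
              + (if F u (e,1) < F v (e,1) then 1 else 0)))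
          = (if e.1 = (u,v) then (2:ℤ) else 0) - (if e.1 = (v,u) then 2 else 0) := by
        intro e
        obtain ⟨⟨a, b⟩, hab⟩ := e
        have hne : a ≠ b := by
          rintro rfl
          exact D.asymm a a hab hab
        have := gadget_delta' a b u v hne
        simp only [hF]
        simp only [Prod.mk.injEq, Subtype.mk.injEq] at *
        convert this using 2 <;> simp [Prod.ext_iff, eq_comm, and_comm]
      rw [Finset.sum_congr rfl (fun e _ => hterm e), Finset.sum_sub_distrib,
        hsum (u,v), hsum (v,u)]
    simp only [Nat.card_eq_fintype_card] at hdiff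
    constructor
    · intro h
      have h' : ¬ D.Adj v u := D.asymm u v h
      rw [if_pos h, if_neg h'] at hdiff
      rw [Nat.card_eq_fintype_card, Nat.card_eq_fintype_card]
      omega
    · intro h
      rw [Nat.card_eq_fintype_card, Nat.card_eq_fintype_card] at h
      by_contra hn
      rw [if_neg hn] at hdiff
      by_cases h' : D.Adj v u
      · rw [if_pos h'] at hdiff; omega
      · rw [if_neg h'] at hdiff; omega
  refine ⟨Fintype.card (E × Fin 2), ?_⟩
  let e := Fintype.equivFin (E × Fin 2)
  refine ⟨fun w j => F w (e.symm j), fun u v => ?_⟩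
  have hcong : ∀ a b : V,
      Nat.card {j : Fin (Fintype.card (E × Fin 2)) // F a (e.symm j) < F b (e.symm j)}
        = Nat.card {c : E × Fin 2 // F a c < F b c} := by
    intro a b
    exact (Nat.card_congr (Equiv.subtypeEquiv e (fun i => by simp))).symm
  refine (key u v).trans ?_
  show _ ↔ Nat.card {j : Fin (Fintype.card (E × Fin 2)) // F u (e.symm j) < F v (e.symm j)}
      < Nat.card {j : Fin (Fintype.card (E × Fin 2)) // F v (e.symm j) < F u (e.symm j)}
  rw [hcong u v, hcong v u]

lemma realizable_trans' {V : Type*} (D : WDigraph V) (d : ℕ) (hd : d ≤ 2)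
    (hreal : Realizable D d) : ∀ x y z, D.Adj x y → D.Adj y z → D.Adj x z := by
  obtain ⟨f, hf⟩ := hreal
  intro x y z hxy hyz
  rw [hf] at hxy hyz ⊢
  interval_cases d
  · exact absurd hxy (weakMaj_char0' _ _)
  · rw [weakMaj_char1'] at hxy hyz ⊢
    exact hyz.trans hxy
  · rw [weakMaj_char2'] at hxy hyz ⊢
    obtain ⟨h1, h2, h3⟩ := hxy
    obtain ⟨h4, h5, h6⟩ := hyz
    refine ⟨h4.trans h1, h5.trans h2, ?_⟩
    rcases h3 with h | h
    · exact Or.inl (lt_of_le_of_lt h4 h)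
    · exact Or.inr (lt_of_le_of_lt h5 h)

end Aux

/-- Every digraph that is `ℝ^2`-realizable is transitive; equivalently, every
(finite) digraph with weak majority dimension at most two is transitive. -/
theorem stmt_11 {V : Type*} [Fintype V] (D : WDigraph V) :
    (Realizable D 2 → ∀ x y z, D.Adj x y → D.Adj y z → D.Adj x z) ∧
    (wdim D ≤ 2 → ∀ x y z, D.Adj x y → D.Adj y z → D.Adj x z) := by
  constructor
  · exact fun h => realizable_trans' D 2 le_rfl h
  · intro h
    obtain ⟨d0, hd0⟩ := exists_realizable' D
    have hne : {d : ℕ | Realizable D d}.Nonempty := ⟨d0, hd0⟩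
    have hmem : Realizable D (wdim D) := Nat.sInf_mem hne
    exact realizable_trans' D (wdim D) h hmem
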